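/- Let C_m be the directed cycle on vertices Z_m with edges (i, (i+1) mod m). For n ≥ 1, the associative spectrum s_n(A(C_m)) of the graph algebra of C_m equals the number of zag sequences (d_1,…,d_n) of length n satisfying d_{i+1} − d_i ∈ {2−m, 3−m, …, 0, 1} for all i ∈ {1,…,n−1}. -/

import Mathlib

/-!
In `A(C_m)` a bracketing `t` takes a value `v ≠ ∞` exactly when its `i`-th variable equals
`v + dᵢ`, where `dᵢ` is the depth of that variable in the DFS tree of `t`. So two bracketings
induce the same term operation iff their depth sequences agree modulo `m`. The depth sequences
of bracketings of size `n` are exactly the zag sequences of length `n`, and every zag sequence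
is congruent modulo `m` to exactly one zag sequence whose increments lie in `[2 - m, 1]`: it is
built greedily, each entry being the largest number `≤` its predecessor plus one in the
prescribed residue class.
-/

namespace AssocSpec

/-- Bracketings of products `x₁ x₂ ⋯ xₙ` represented as binary trees whose
leaves, read from left to right, are the variables `x₁, …, xₙ`. -/
inductive BTree : Type
  | leaf : BTree
  | node : BTree → BTree → BTree

namespace BTree

/-- The size of a bracketing: its number of variables (leaves). -/
def size : BTree → ℕ
  | leaf => 1
  | node l r => l.size + r.size

/-- Evaluate a bracketing in a magma `(A, op)`, the leaves taking the values
`f k, f (k+1), …` from left to right. -/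
def evalFrom {A : Type*} (op : A → A → A) : BTree → (ℕ → A) → ℕ → A
  | leaf, f, k => f k
  | node l r, f, k => op (evalFrom op l f k) (evalFrom op r f (k + l.size))

/-- The term operation induced by a bracketing `t` on a magma `(A, op)`;
the `i`-th variable (0-indexed) takes the value `f i`. -/
def termOp {A : Type*} (op : A → A → A) (t : BTree) (f : ℕ → A) : A :=
  evalFrom op t f 0

/-- The depth sequence of the DFS tree `G(t)` of a bracketing `t`: the `i`-th
entry is the depth of the `i`-th variable (0-indexed) in `G(t)`. -/
def depths : BTree → List ℕ
  | leaf => [0]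
  | node l r => l.depths ++ r.depths.map (· + 1)

/-- The depth of the `i`-th variable (0-indexed) in the DFS tree `G(t)`. -/
def depth (t : BTree) (i : ℕ) : ℕ := t.depths.getD i 0

/-- The height of the DFS tree `G(t)`: the maximum depth of a variable. -/
def height (t : BTree) : ℕ := t.depths.foldr max 0

/-- The edges of the DFS tree `G(t)`, the variables being indexed from the
given offset: `(p, c)` is an edge iff `x_p` is the parent of `x_c`. -/
def edgesFrom : BTree → ℕ → List (ℕ × ℕ)
  | leaf, _ => []
  | node l r, k => (k, k + l.size) :: (l.edgesFrom k ++ r.edgesFrom (k + l.size))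

/-- The edges of the DFS tree `G(t)` (variables indexed from `0`). -/
def edges (t : BTree) : List (ℕ × ℕ) := t.edgesFrom 0

end BTree

open Classical in
/-- The operation of the graph algebra of the digraph with vertex set `V` and
edge relation `E`; `none` plays the role of `∞`. -/
noncomputable def gaOp {V : Type*} (E : V → V → Prop) :
    Option V → Option V → Option V
  | some x, some y => if E x y then some x else none
  | _, _ => none

/-- The magma `(A, op)` satisfies the bracketing identity `t ≈ t'`. -/
def Satisfies {A : Type*} (op : A → A → A) (t t' : BTree) : Prop :=
  ∀ f : ℕ → A, BTree.termOp op t f = BTree.termOp op t' f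

/-- The `n`-th member `s_n` of the associative spectrum of the magma `(A, op)`:
the number of distinct term operations induced by bracketings of size `n`. -/
noncomputable def spectrum {A : Type*} (op : A → A → A) (n : ℕ) : ℕ :=
  Set.ncard {g : (ℕ → A) → A | ∃ t : BTree, t.size = n ∧ g = BTree.termOp op t}

/-- Reachability (by a walk) in the digraph with edge relation `E`. -/
def Reach {V : Type*} (E : V → V → Prop) : V → V → Prop :=
  Relation.ReflTransGen E

/-- `u` and `v` lie in the same strongly connected component. -/
def SameSCC {V : Type*} (E : V → V → Prop) (u v : V) : Prop :=
  Reach E u v ∧ Reach E v u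

/-- The strongly connected component of `v`, as a set of vertices. -/
def scc {V : Type*} (E : V → V → Prop) (v : V) : Set V :=
  {u | SameSCC E u v}

/-- `v` lies in a nontrivial strongly connected component (one carrying at
least one edge), i.e. `v` lies on a closed walk of positive length. -/
def InNontrivialSCC {V : Type*} (E : V → V → Prop) (v : V) : Prop :=
  ∃ u, E v u ∧ Reach E u v

/-- The induced subgraph on the set `K` (with the edge relation `E`) is an
`m`-whirl: `K` is partitioned into blocks `B 0, …, B (m-1)` so that edges go
exactly from each block to the cyclically next one. -/
def IsWhirlOn {V : Type*} (E : V → V → Prop) (K : Set V) (m : ℕ) : Prop :=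
  ∃ B : ZMod m → Set V,
    (∀ i, (B i).Nonempty) ∧
    (∀ i, B i ⊆ K) ∧
    (∀ x ∈ K, ∃! i, x ∈ B i) ∧
    (∀ x ∈ K, ∀ y ∈ K, (E x y ↔ ∃ i, x ∈ B i ∧ y ∈ B (i + 1)))

/-- `p 0 → p 1 → ⋯ → p len` is a path (a walk with pairwise distinct
vertices) in the digraph with edge relation `E`. -/
def IsPath {V : Type*} (E : V → V → Prop) (len : ℕ) (p : ℕ → V) : Prop :=
  (∀ i < len, E (p i) (p (i + 1))) ∧
  (∀ i ≤ len, ∀ j ≤ len, p i = p j → i = j)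

/-- The walk `p 0 → ⋯ → p len` is pleasant: all its vertices belong to
trivial strongly connected components. -/
def IsPleasant {V : Type*} (E : V → V → Prop) (len : ℕ) (p : ℕ → V) : Prop :=
  ∀ i ≤ len, ¬ InNontrivialSCC E (p i)

/-- The connected component `K` (of an undirected graph) is complete
bipartite: it splits into two nonempty parts with edges exactly between
vertices of different parts. -/
def IsCompleteBipartiteOn {V : Type*} (E : V → V → Prop) (K : Set V) : Prop :=
  ∃ B1 B2 : Set V, B1.Nonempty ∧ B2.Nonempty ∧ B1 ∪ B2 = K ∧ B1 ∩ B2 = ∅ ∧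
    ∀ x ∈ K, ∀ y ∈ K, (E x y ↔ (x ∈ B1 ∧ y ∈ B2) ∨ (x ∈ B2 ∧ y ∈ B1))

/-- A DFS tree of size `n`: a rooted directed tree on the vertices
`x₁, …, xₙ` (here `Fin n`, the root being `0`), given by its parent function,
such that the parent of every non-root vertex precedes it and the vertex set
of the induced subtree rooted at any vertex `i` is an interval `[i, i']`.
(The parent of the root is, by convention, the root itself.) -/
structure DFSTree (n : ℕ) where
  parent : Fin n → Fin n
  parent_lt : ∀ i : Fin n, 0 < (i : ℕ) → (parent i : ℕ) < (i : ℕ)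
  parent_root : ∀ i : Fin n, (i : ℕ) = 0 → parent i = i
  interval : ∀ i j k : Fin n, i ≤ j → j ≤ k →
    (∃ a : ℕ, parent^[a] k = i) → (∃ a : ℕ, parent^[a] j = i)

/-- The depth of the vertex `i` in a DFS tree: the length of the path from
the root to `i`. -/
noncomputable def DFSTree.depth {n : ℕ} (T : DFSTree n) (i : Fin n) : ℕ :=
  sInf {k : ℕ | (T.parent^[k] i : ℕ) = 0}

/-- The height of a DFS tree: the maximum depth of a vertex. -/
noncomputable def DFSTree.height {n : ℕ} (T : DFSTree n) : ℕ :=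
  Finset.univ.sup fun i => T.depth i

/-- The vertex `i` is a leaf (childless vertex) of the DFS tree `T`. -/
def DFSTree.IsLeaf {n : ℕ} (T : DFSTree n) (i : Fin n) : Prop :=
  ∀ j : Fin n, T.parent j = i → j = i

/-- `t_h(n)`: the number of DFS trees of size `n` of height at most `h`. -/
noncomputable def tcount (h n : ℕ) : ℕ :=
  Nat.card {T : DFSTree n // T.height ≤ h}

/-- `d` is a zag sequence: `d₁ = 0`, `d₂ = 1`, and
`1 ≤ d_{i+1} ≤ d_i + 1` for all `i` (1-indexed as in the paper;
here `d : Fin n → ℕ` is 0-indexed). -/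
def IsZag {n : ℕ} (d : Fin n → ℕ) : Prop :=
  (∀ h : 0 < n, d ⟨0, h⟩ = 0) ∧
  (∀ h : 1 < n, d ⟨1, h⟩ = 1) ∧
  (∀ i : ℕ, ∀ h : i + 1 < n,
    1 ≤ d ⟨i + 1, h⟩ ∧ d ⟨i + 1, h⟩ ≤ d ⟨i, Nat.lt_of_succ_lt h⟩ + 1)

/-- `M(t,t')`: the largest `m` such that the depth sequences of the DFS trees
of the bracketings `t` and `t'` are congruent modulo `m`. -/
noncomputable def Mval (t t' : BTree) : ℕ :=
  sSup {m : ℕ | ∀ i < t.size, t.depth i ≡ t'.depth i [MOD m]}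

end AssocSpec

theorem Set.ncard_image_eq_ncard_image_of_eq_iff {α β γ : Type*} {f : α → β} {g : α → γ}
    {s : Set α} (h : ∀ a ∈ s, ∀ b ∈ s, f a = f b ↔ g a = g b) :
    (f '' s).ncard = (g '' s).ncard := by
  refine Set.ncard_congr (fun _ hy => g hy.choose) (fun _ hy => ⟨_, hy.choose_spec.1, rfl⟩)
    (fun y y' hy hy' hgg => ?_) ?_
  · rw [← hy.choose_spec.2, ← hy'.choose_spec.2]
    exact (h _ hy.choose_spec.1 _ hy'.choose_spec.1).2 hgg
  · rintro _ ⟨a, ha, rfl⟩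
    have hfa : f a ∈ f '' s := ⟨a, ha, rfl⟩
    exact ⟨f a, hfa, (h _ hfa.choose_spec.1 _ ha).1 hfa.choose_spec.2⟩

namespace AssocSpec

def ZagStep (a b : ℕ) : Prop := 1 ≤ b ∧ b ≤ a + 1

/-- `chainsFromZero ZagStep n` is the set of zag sequences of length `n`; `d₂ = 1` is forced. -/
def chainsFromZero (R : ℕ → ℕ → Prop) (n : ℕ) : Set (List ℕ) :=
  {L | L.length = n ∧ L.head? = some 0 ∧ L.IsChain R}

namespace BTree

theorem length_depths (t : BTree) : t.depths.length = t.size := by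
  induction t with
  | leaf => rfl
  | node l r ihl ihr => simp [depths, size, ihl, ihr]

theorem depths_ne_nil (t : BTree) : t.depths ≠ [] := by
  cases t <;> simp [depths, depths_ne_nil]

theorem head?_depths (t : BTree) : t.depths.head? = some 0 := by
  induction t with
  | leaf => rfl
  | node l r ihl _ => simp [depths, ihl]

theorem isChain_depths (t : BTree) : t.depths.IsChain ZagStep := by
  induction t with
  | leaf => simp [depths]
  | node l r ihl ihr =>
    refine List.IsChain.append ihl (List.isChain_map_of_isChain _ ?_ ihr) ?_
    · exact fun a b ⟨_, hab⟩ => ⟨by omega, by omega⟩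
    · intro x _ y hy
      simp only [List.head?_map, head?_depths, Option.map_some, Option.mem_def,
        Option.some.injEq] at hy
      exact ⟨by omega, by omega⟩

theorem depth_eq_getElem (t : BTree) {i : ℕ} (hi : i < t.depths.length) :
    t.depth i = t.depths[i] :=
  List.getD_eq_getElem _ _ hi

theorem depth_node_left (l r : BTree) {i : ℕ} (h : i < l.size) :
    (node l r).depth i = l.depth i :=
  List.getD_append _ _ _ _ (by rwa [length_depths])

theorem depth_node_right (l r : BTree) {i : ℕ} (h : i < r.size) :
    (node l r).depth (l.size + i) = r.depth i + 1 := by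
  have hr : i < r.depths.length := by rwa [length_depths]
  simp only [depth, depths]
  rw [List.getD_append_right _ _ _ _ (by rw [length_depths]; omega), length_depths,
    Nat.add_sub_cancel_left, List.getD_eq_getElem _ _ (by simpa using hr), List.getElem_map,
    List.getD_eq_getElem _ _ hr]

def graft : BTree → ℕ → BTree
  | t, 0 => node t leaf
  | leaf, _ + 1 => node leaf leaf
  | node l r, k + 1 => node l (graft r k)

theorem depths_graft (t : BTree) {k : ℕ} (hk : k ≤ t.depths.getLast t.depths_ne_nil) :
    (t.graft k).depths = t.depths ++ [k + 1] := by
  induction t generalizing k with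
  | leaf => cases k <;> simp_all [graft, depths]
  | node l r _ ihr =>
    cases k with
    | zero => simp [graft, depths]
    | succ k =>
      simp only [depths] at hk
      rw [List.getLast_append_of_ne_nil _ (by simpa using r.depths_ne_nil), List.getLast_map] at hk
      simp [graft, depths, ihr (Nat.le_of_succ_le_succ hk)]

theorem exists_depths_eq {l : List ℕ} (hl : (0 :: l).IsChain ZagStep) :
    ∃ t : BTree, t.depths = 0 :: l := by
  induction l using List.reverseRecOn with
  | nil => exact ⟨leaf, rfl⟩
  | append_singleton l b ih =>
    rw [← List.cons_append, List.isChain_append] at hl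
    obtain ⟨hl, -, hlast⟩ := hl
    obtain ⟨t, ht⟩ := ih hl
    obtain ⟨hb1, hb2⟩ := hlast _ (List.getLast?_eq_some_getLast (List.cons_ne_nil 0 l)) b rfl
    refine ⟨t.graft (b - 1), ?_⟩
    rw [depths_graft t (by simp only [ht]; omega), ht, Nat.sub_add_cancel hb1, List.cons_append]

theorem image_depths (n : ℕ) :
    depths '' {t | t.size = n} = chainsFromZero ZagStep n := by
  ext L
  constructor
  · rintro ⟨t, rfl, rfl⟩
    exact ⟨t.length_depths, t.head?_depths, t.isChain_depths⟩
  · rintro ⟨rfl, hL0, hL⟩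
    obtain ⟨l, rfl⟩ := List.head?_eq_some_iff.mp hL0
    obtain ⟨t, ht⟩ := exists_depths_eq hL
    exact ⟨t, (length_depths t).symm.trans (congrArg List.length ht), ht⟩

end BTree

theorem gaOp_eq_some_iff {V : Type*} (E : V → V → Prop) (a b : Option V) (v : V) :
    gaOp E a b = some v ↔ a = some v ∧ ∃ y, b = some y ∧ E v y := by
  rcases a with _ | x <;> rcases b with _ | y <;> simp only [gaOp, reduceCtorEq, false_and,
    exists_false, and_false, Option.some.injEq, exists_eq_left']
  split_ifs with h <;> grind

section Successor

open BTree

variable {G : Type*} [AddCommMonoidWithOne G]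

theorem evalFrom_succ_eq_some_iff (t : BTree) (f : ℕ → Option G) (k : ℕ) (v : G) :
    evalFrom (gaOp (fun x y : G => y = x + 1)) t f k = some v ↔
      ∀ i < t.size, f (k + i) = some (v + t.depth i) := by
  induction t generalizing k v with
  | leaf => simp [evalFrom, size, depth, depths]
  | node l r ihl ihr =>
    rw [evalFrom, gaOp_eq_some_iff, ihl]
    simp only [ihr, exists_eq_right, size]
    constructor
    · rintro ⟨hl, hr⟩ i hi
      rcases lt_or_ge i l.size with hil | hil
      · rw [depth_node_left l r hil]
        exact hl i hil
      · obtain ⟨j, rfl⟩ := Nat.exists_eq_add_of_le hil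
        rw [depth_node_right l r (by omega), ← add_assoc, hr j (by omega)]
        push_cast
        rw [add_right_comm, add_assoc]
    · intro h
      refine ⟨fun i hi => ?_, fun j hj => ?_⟩
      · rw [← depth_node_left l r hi]
        exact h i (by omega)
      · have := h (l.size + j) (by omega)
        rw [depth_node_right l r hj, ← add_assoc] at this
        rw [this]
        push_cast
        rw [add_right_comm, add_assoc]

theorem termOp_succ_eq_some_iff (t : BTree) (f : ℕ → Option G) (v : G) :
    termOp (gaOp (fun x y : G => y = x + 1)) t f = some v ↔
      ∀ i < t.size, f i = some (v + t.depth i) := by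
  simp [termOp, evalFrom_succ_eq_some_iff]

theorem termOp_succ_eq_termOp_iff {t t' : BTree} (h : t.size = t'.size) :
    termOp (gaOp (fun x y : G => y = x + 1)) t = termOp (gaOp (fun x y : G => y = x + 1)) t' ↔
      t.depths.map (Nat.cast : ℕ → G) = t'.depths.map Nat.cast := by
  have hdepths : t.depths.map (Nat.cast : ℕ → G) = t'.depths.map Nat.cast ↔
      ∀ i < t.size, (t.depth i : G) = t'.depth i := by
    simp only [List.ext_getElem_iff, List.length_map, length_depths, h, true_and,
      List.getElem_map]
    exact forall₂_congr fun i hi => by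
      rw [depth_eq_getElem _ (by rwa [length_depths, h]),
        depth_eq_getElem _ (by rwa [length_depths])]
      exact ⟨fun H => H hi, fun H _ => H⟩
  rw [hdepths]
  constructor
  · intro hop i hi
    let f : ℕ → Option G := fun i => some (t.depth i)
    have hf : termOp (gaOp (fun x y : G => y = x + 1)) t f = some 0 :=
      (termOp_succ_eq_some_iff t f 0).2 (by simp [f])
    rw [hop, termOp_succ_eq_some_iff] at hf
    simpa [f] using hf i (h ▸ hi)
  · intro hd
    funext f
    refine Option.ext fun v => ?_
    simp only [termOp_succ_eq_some_iff, ← h]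
    exact forall₂_congr fun i hi => by rw [hd i hi]

end Successor

theorem spectrum_eq_ncard_image {A : Type*} (op : A → A → A) (n : ℕ) :
    spectrum op n = (BTree.termOp op '' {t | t.size = n}).ncard := by
  simp only [spectrum, Set.image, Set.mem_ofPred_eq, eq_comm]

/-- The condition `2 - m ≤ b - a`, written without truncated subtraction. -/
def BoundedZagStep (m a b : ℕ) : Prop := ZagStep a b ∧ a + 2 ≤ b + m

theorem exists_cast_eq_of_le_succ {m a b : ℕ} (hm : 0 < m) (hb : b ≤ a + 1) :
    ∃ c, b ≤ c ∧ c ≤ a + 1 ∧ a + 1 < c + m ∧ (c : ZMod m) = b := by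
  have hmod := Nat.mod_lt (a + 1 - b) hm
  have hle := Nat.mod_le (a + 1 - b) m
  have hc : a + 1 - (a + 1 - b) % m = b + m * ((a + 1 - b) / m) := by
    have := Nat.div_add_mod (a + 1 - b) m
    omega
  exact ⟨a + 1 - (a + 1 - b) % m, by omega, by omega, by omega, by simp [hc]⟩

theorem exists_isChain_boundedZagStep {m : ℕ} (hm : 0 < m) {p a : ℕ} {l : List ℕ}
    (hpa : p ≤ a) (hl : (p :: l).IsChain ZagStep) :
    ∃ l', l'.map (Nat.cast : ℕ → ZMod m) = l.map Nat.cast ∧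
      (a :: l').IsChain (BoundedZagStep m) := by
  induction l generalizing p a with
  | nil => exact ⟨[], rfl, List.isChain_singleton a⟩
  | cons b l ih =>
    rw [List.isChain_cons_cons] at hl
    obtain ⟨⟨hb1, hb2⟩, hl⟩ := hl
    obtain ⟨c, hbc, hca, hac, hcast⟩ := exists_cast_eq_of_le_succ hm (by omega : b ≤ a + 1)
    obtain ⟨l', hmap, hchain⟩ := ih hbc hl
    exact ⟨c :: l', by simp [hcast, hmap], hchain.cons_cons ⟨⟨by omega, hca⟩, by omega⟩⟩

theorem eq_of_isChain_boundedZagStep {m a : ℕ} {l l' : List ℕ}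
    (hl : (a :: l).IsChain (BoundedZagStep m)) (hl' : (a :: l').IsChain (BoundedZagStep m))
    (h : l.map (Nat.cast : ℕ → ZMod m) = l'.map Nat.cast) : l = l' := by
  induction l generalizing a l' with
  | nil => simpa using h.symm
  | cons b l ih =>
    obtain _ | ⟨b', l'⟩ := l'
    · simp at h
    rw [List.isChain_cons_cons] at hl hl'
    simp only [List.map_cons, List.cons.injEq] at h
    obtain ⟨⟨⟨-, hb⟩, hb'⟩, hl⟩ := hl
    obtain ⟨⟨⟨-, hc⟩, hc'⟩, hl'⟩ := hl'
    have hbb' : b = b' := ((ZMod.natCast_eq_natCast_iff _ _ _).mp h.1).eq_of_abs_lt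
      (abs_sub_lt_iff.mpr ⟨by omega, by omega⟩)
    subst hbb'
    rw [ih hl hl' h.2]

theorem image_map_cast_chainsFromZero_zagStep {m : ℕ} (hm : 0 < m) (n : ℕ) :
    List.map (Nat.cast : ℕ → ZMod m) '' chainsFromZero ZagStep n =
      List.map Nat.cast '' chainsFromZero (BoundedZagStep m) n := by
  ext L
  constructor
  · rintro ⟨_, ⟨rfl, h0, hL⟩, rfl⟩
    obtain ⟨l, rfl⟩ := List.head?_eq_some_iff.mp h0
    obtain ⟨l', hmap, hchain⟩ := exists_isChain_boundedZagStep hm le_rfl hL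
    exact ⟨0 :: l', ⟨by simpa using congrArg List.length hmap, rfl, hchain⟩, by simp [hmap]⟩
  · rintro ⟨L, ⟨hlen, h0, hL⟩, rfl⟩
    exact ⟨L, ⟨hlen, h0, hL.imp fun _ _ h => h.1⟩, rfl⟩

theorem injOn_map_cast_chainsFromZero_boundedZagStep (m n : ℕ) :
    Set.InjOn (List.map (Nat.cast : ℕ → ZMod m)) (chainsFromZero (BoundedZagStep m) n) := by
  rintro _ ⟨-, h0, hL⟩ _ ⟨-, h0', hL'⟩ h
  obtain ⟨l, rfl⟩ := List.head?_eq_some_iff.mp h0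
  obtain ⟨l', rfl⟩ := List.head?_eq_some_iff.mp h0'
  rw [eq_of_isChain_boundedZagStep hL hL' (by simpa using h)]

theorem ofFn_mem_chainsFromZero_boundedZagStep_iff {m n : ℕ} (hn : 0 < n) (d : Fin n → ℕ) :
    List.ofFn d ∈ chainsFromZero (BoundedZagStep m) n ↔ IsZag d ∧
      ∀ i : ℕ, ∀ h : i + 1 < n,
        (2 - (m : ℤ) ≤ (d ⟨i + 1, h⟩ : ℤ) - (d ⟨i, Nat.lt_of_succ_lt h⟩ : ℤ)) ∧
        ((d ⟨i + 1, h⟩ : ℤ) - (d ⟨i, Nat.lt_of_succ_lt h⟩ : ℤ) ≤ 1) := by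
  have hhead : (List.ofFn d).head? = some (d ⟨0, hn⟩) := by
    simp [List.head?_eq_getElem?, hn]
  simp only [chainsFromZero, Set.mem_ofPred_eq, List.length_ofFn, hhead, Option.some.injEq,
    List.isChain_ofFn, BoundedZagStep, ZagStep, IsZag, true_and]
  constructor
  · rintro ⟨h0, hstep⟩
    refine ⟨⟨fun _ => h0, fun h1 => ?_, fun i hi => (hstep i hi).1⟩, fun i hi => ?_⟩
    · have := (hstep 0 h1).1
      simp only [Nat.zero_add] at this
      omega
    · have := hstep i hi
      omega
  · rintro ⟨⟨h0, -, hstep⟩, hbound⟩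
    exact ⟨h0 hn, fun i hi => ⟨hstep i hi, by have := hbound i hi; omega⟩⟩

theorem ncard_chainsFromZero_boundedZagStep {m n : ℕ} (hn : 0 < n) :
    (chainsFromZero (BoundedZagStep m) n).ncard =
      Set.ncard {d : Fin n → ℕ | IsZag d ∧
        ∀ i : ℕ, ∀ h : i + 1 < n,
          (2 - (m : ℤ) ≤ (d ⟨i + 1, h⟩ : ℤ) - (d ⟨i, Nat.lt_of_succ_lt h⟩ : ℤ)) ∧
          ((d ⟨i + 1, h⟩ : ℤ) - (d ⟨i, Nat.lt_of_succ_lt h⟩ : ℤ) ≤ 1)} := by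
  rw [← List.ofFn_injective.injOn.ncard_image]
  congr 1
  ext L
  constructor
  · intro hL
    obtain rfl : L.length = n := hL.1
    refine ⟨fun i => L[(i : ℕ)], (ofFn_mem_chainsFromZero_boundedZagStep_iff hn _).1 ?_,
      List.ofFn_getElem⟩
    rwa [List.ofFn_getElem]
  · rintro ⟨d, hd, rfl⟩
    exact (ofFn_mem_chainsFromZero_boundedZagStep_iff hn d).2 hd

end AssocSpec

open AssocSpec in
/-- For the directed `m`-cycle `C_m`, the associative
spectrum `s_n(A(C_m))` equals the number of zag sequences `(d₁, …, d_n)` with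
`d_{i+1} - d_i ∈ {2-m, …, 0, 1}` for all `i ∈ {1, …, n-1}`. -/
theorem stmt6 (m : ℕ) (hm : 1 ≤ m) (n : ℕ) (hn : 1 ≤ n) :
    spectrum (gaOp (fun i j : ZMod m => j = i + 1)) n =
    Set.ncard {d : Fin n → ℕ | IsZag d ∧
      ∀ i : ℕ, ∀ h : i + 1 < n,
        (2 - (m : ℤ) ≤ (d ⟨i + 1, h⟩ : ℤ) - (d ⟨i, Nat.lt_of_succ_lt h⟩ : ℤ)) ∧
        ((d ⟨i + 1, h⟩ : ℤ) - (d ⟨i, Nat.lt_of_succ_lt h⟩ : ℤ) ≤ 1)} := by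
  calc spectrum (gaOp (fun i j : ZMod m => j = i + 1)) n
      = (BTree.termOp (gaOp (fun i j : ZMod m => j = i + 1)) '' {t | t.size = n}).ncard :=
        spectrum_eq_ncard_image _ n
    _ = ((fun t : BTree => t.depths.map (Nat.cast : ℕ → ZMod m)) '' {t | t.size = n}).ncard :=
        Set.ncard_image_eq_ncard_image_of_eq_iff fun _ ht _ ht' =>
          termOp_succ_eq_termOp_iff (ht.trans ht'.symm)
    _ = (List.map (Nat.cast : ℕ → ZMod m) '' chainsFromZero ZagStep n).ncard := by
        rw [← BTree.image_depths, Set.image_image]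
    _ = (chainsFromZero (BoundedZagStep m) n).ncard := by
        rw [image_map_cast_chainsFromZero_zagStep hm,
          (injOn_map_cast_chainsFromZero_boundedZagStep m n).ncard_image]
    _ = _ := ncard_chainsFromZero_boundedZagStep hn
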